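/- arXiv:1409.8058 — 2 statements merged into one kernel-verified Lean document; each statement's English description precedes it below -/
import Mathlib

section
/- Under the standing assumptions, for every f ∈ 𝒳 the element (R̄ℬ f)(t) = ∫₀ᵗ T̄(t−s) B f(s) ds belongs to X for every t ∈ [0,t₀], and the map [0,t₀] → X, t ↦ (R̄ℬ f)(t), is continuous and vanishes at t = 0; hence R̄ℬ is a well-defined linear map from 𝒳 to 𝒳. -/
open Filter Topology Set MeasureTheory

namespace DS

section SemigroupDefs

variable {E : Type*} [AddCommGroup E] [Module ℝ E] [TopologicalSpace E]

/-- `I` is the Riemann integral of `g` over `[a,b]`, defined as the limit of the left Riemann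
sums over uniform partitions. -/
def IsRiemannIntegral (g : ℝ → E) (a b : ℝ) (I : E) : Prop :=
  Tendsto
    (fun n : ℕ => ((b - a) / (n : ℝ)) •
      ∑ k ∈ Finset.range n, g (a + (b - a) * (k : ℝ) / (n : ℝ)))
    atTop (𝓝 I)

/-- `(T t)_{t ≥ 0}` is a `C₀`-semigroup. -/
def IsC0Semigroup (T : ℝ → E →L[ℝ] E) : Prop :=
  T 0 = ContinuousLinearMap.id ℝ E ∧
    (∀ t s : ℝ, 0 ≤ t → 0 ≤ s → T (t + s) = (T t).comp (T s)) ∧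
    ∀ x : E, ContinuousOn (fun t : ℝ => T t x) (Ici (0 : ℝ))

/-- Local equicontinuity of a one-parameter family of operators. -/
def IsLocallyEquicontinuous (T : ℝ → E →L[ℝ] E) : Prop :=
  ∀ t₀ : ℝ, 0 < t₀ → ∀ p : Seminorm ℝ E, Continuous (fun x : E => p x) →
    ∃ q : Seminorm ℝ E, Continuous (fun x : E => q x) ∧
      ∃ M : ℝ, 0 ≤ M ∧ ∀ x : E, ∀ t ∈ Icc (0 : ℝ) t₀, p (T t x) ≤ M * q x

/-- `A`, with domain `domA`, is the infinitesimal generator of the semigroup `T`. -/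
def IsGenerator (T : ℝ → E →L[ℝ] E) (domA : Set E) (A : E → E) : Prop :=
  (∀ x : E, x ∈ domA ↔
      ∃ y : E, Tendsto (fun t : ℝ => t⁻¹ • (T t x - x)) (𝓝[>] 0) (𝓝 y)) ∧
    ∀ x ∈ domA, Tendsto (fun t : ℝ => t⁻¹ • (T t x - x)) (𝓝[>] 0) (𝓝 (A x))

/-- Derivative of a vector-valued function within a set, in a topological vector space. -/
def HasDerivWithinAtLC (f : ℝ → E) (y : E) (s : Set ℝ) (t : ℝ) : Prop :=
  Tendsto (fun u : ℝ => (u - t)⁻¹ • (f u - f t)) (𝓝[s \ {t}] t) (𝓝 y)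

/-- Membership in `𝒳 = { f ∈ C([0,t₀],E) : f 0 = 0 }`; functions are given on all of `ℝ`,
but only their restriction to `[0,t₀]` is relevant. -/
def MemXc (t₀ : ℝ) (f : ℝ → E) : Prop :=
  ContinuousOn f (Icc (0 : ℝ) t₀) ∧ f 0 = 0

/-- `f ∈ D(𝒟)` with `𝒟 f = f'`. -/
def MemDD (t₀ : ℝ) (f f' : ℝ → E) : Prop :=
  MemXc t₀ f ∧ (∀ t ∈ Icc (0 : ℝ) t₀, HasDerivWithinAtLC f (f' t) (Icc (0 : ℝ) t₀) t) ∧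
    ContinuousOn f' (Icc (0 : ℝ) t₀) ∧ f' 0 = 0

/-- `f ∈ D(𝒜)` for the operator `𝒜` induced on `𝒳` by `A` with domain `domA`. -/
def MemDA (t₀ : ℝ) (domA : Set E) (A : E → E) (f : ℝ → E) : Prop :=
  MemXc t₀ f ∧ (∀ t ∈ Icc (0 : ℝ) t₀, f t ∈ domA) ∧
    ContinuousOn (fun t : ℝ => A (f t)) (Icc (0 : ℝ) t₀)

end SemigroupDefs

/-- Sequential completeness of a uniform space. -/
def SeqComplete (E : Type*) [UniformSpace E] : Prop :=
  ∀ u : ℕ → E, CauchySeq u → ∃ x : E, Tendsto u atTop (𝓝 x)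

end DS

open DS

/-!
For `t ∈ [0, t₀]` let `f_t := delay f (t₀ - t)`, i.e. `f` shifted right by `t₀ - t` and padded
with `f 0 = 0`. Condition (c) applied to `f_t` gives `g t ∈ X` with
`e (g t) = ∫₀^{t₀} T̄(t₀ - s) B f_t(s) ds`, and this equals `∫₀ᵗ T̄(t - s) B f(s) ds`: the latter
Riemann integral exists because its sums are Cauchy in every continuous seminorm, and the two
integrals agree because continuous functionals separate the points of the locally convex space `X̄`
and, for scalar integrals, the identity is the substitution `s ↦ s - (t₀ - t)`. Condition (d)
applied to `f_{t'} - f_t` bounds each seminorm of `g t' - g t` by the modulus of continuity of `f`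
at `|t' - t|`, so `g` is continuous; `g 0 = 0` since an integral over `[0, 0]` vanishes and `e` is
injective.
-/

noncomputable section

namespace DS

theorem _root_.Finset.sum_range_mul_eq_sum_sum {M : Type*} [AddCommMonoid M] (f : ℕ → M)
    (n m : ℕ) : ∑ j ∈ Finset.range (n * m), f j =
      ∑ k ∈ Finset.range n, ∑ r ∈ Finset.range m, f (k * m + r) := by
  induction n with
  | zero => simp
  | succ n ih => rw [Nat.succ_mul, Finset.sum_range_add, ih, Finset.sum_range_succ]

section RiemannSum

variable {E : Type*} [AddCommGroup E] [Module ℝ E]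

def partitionPoint (a b : ℝ) (n k : ℕ) : ℝ := a + (b - a) * k / n

def riemannSum (g : ℝ → E) (a b : ℝ) (n : ℕ) : E :=
  ((b - a) / n) • ∑ k ∈ Finset.range n, g (partitionPoint a b n k)

theorem isRiemannIntegral_iff [TopologicalSpace E] {g : ℝ → E} {a b : ℝ} {I : E} :
    IsRiemannIntegral g a b I ↔ Tendsto (riemannSum g a b) atTop (𝓝 I) :=
  Iff.rfl

variable {a b : ℝ} {n : ℕ}

theorem partitionPoint_zero : partitionPoint a b n 0 = a := by
  simp [partitionPoint]

theorem partitionPoint_self (hn : n ≠ 0) : partitionPoint a b n n = b := by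
  have : (n : ℝ) ≠ 0 := Nat.cast_ne_zero.2 hn
  simp only [partitionPoint]
  field_simp
  ring

theorem partitionPoint_succ_sub (k : ℕ) :
    partitionPoint a b n (k + 1) - partitionPoint a b n k = (b - a) / n := by
  simp only [partitionPoint, Nat.cast_succ]
  ring

theorem partitionPoint_mem_Icc (hab : a ≤ b) {k : ℕ} (hk : k ≤ n) :
    partitionPoint a b n k ∈ Icc a b := by
  have hkn : (k : ℝ) / n ∈ Icc (0 : ℝ) 1 :=
    ⟨by positivity, div_le_one_of_le₀ (by exact_mod_cast hk) n.cast_nonneg⟩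
  have hba : 0 ≤ b - a := sub_nonneg.2 hab
  simp only [partitionPoint, mul_div_assoc, mem_Icc]
  constructor <;> nlinarith [hkn.1, hkn.2]

theorem partitionPoint_mul_add_sub (hn : n ≠ 0) {m : ℕ} (hm : m ≠ 0) (k r : ℕ) :
    partitionPoint a b (n * m) (k * m + r) - partitionPoint a b n k = (b - a) * r / (n * m) := by
  simp only [partitionPoint]
  push_cast
  field_simp
  ring

@[simp]
theorem riemannSum_self (g : ℝ → E) (a : ℝ) (n : ℕ) : riemannSum g a a n = 0 := by
  simp [riemannSum]

variable [TopologicalSpace E] {g g' : ℝ → E} {I I' : E}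

theorem isRiemannIntegral_self (g : ℝ → E) (a : ℝ) : IsRiemannIntegral g a a 0 :=
  tendsto_const_nhds.congr fun n => (riemannSum_self g a n).symm

theorem IsRiemannIntegral.unique [T2Space E] (h : IsRiemannIntegral g a b I)
    (h' : IsRiemannIntegral g a b I') : I = I' :=
  tendsto_nhds_unique h h'

theorem IsRiemannIntegral.sub [IsTopologicalAddGroup E] (h : IsRiemannIntegral g a b I)
    (h' : IsRiemannIntegral g' a b I') :
    IsRiemannIntegral (fun x => g x - g' x) a b (I - I') := by
  refine (Tendsto.sub h h').congr fun n => ?_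
  simp only [Finset.sum_sub_distrib, smul_sub]

theorem IsRiemannIntegral.map {F : Type*} [AddCommGroup F] [Module ℝ F] [TopologicalSpace F]
    (h : IsRiemannIntegral g a b I) (φ : E →L[ℝ] F) :
    IsRiemannIntegral (fun x => φ (g x)) a b (φ I) := by
  refine ((φ.continuous.tendsto I).comp h).congr fun n => ?_
  simp [map_sum]

end RiemannSum

section IntervalIntegral

variable {F : Type*} [NormedAddCommGroup F] [NormedSpace ℝ F]

theorem intervalIntegral_eq_of_delay {u U : ℝ → F} {t b : ℝ} (ht : 0 ≤ t) (htb : t ≤ b)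
    (hU : IntervalIntegrable U volume 0 b) (hU0 : ∀ s ∈ Icc 0 (b - t), U s = 0)
    (hUu : ∀ s ∈ Icc (b - t) b, U s = u (s - (b - t))) :
    ∫ s in 0..b, U s = ∫ s in 0..t, u s := by
  have hmem : b - t ∈ uIcc 0 b := mem_uIcc_of_le (by linarith) (by linarith)
  rw [← intervalIntegral.integral_add_adjacent_intervals
      (hU.mono_set (uIcc_subset_uIcc left_mem_uIcc hmem))
      (hU.mono_set (uIcc_subset_uIcc hmem right_mem_uIcc)),
    intervalIntegral.integral_congr (g := fun _ => 0) fun s hs =>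
      hU0 s (by rwa [uIcc_of_le (by linarith)] at hs),
    intervalIntegral.integral_congr (g := fun s => u (s - (b - t))) fun s hs =>
      hUu s (by rwa [uIcc_of_le (by linarith)] at hs),
    intervalIntegral.integral_comp_sub_right]
  simp

variable [CompleteSpace F] {g : ℝ → F} {a b ε : ℝ} {n : ℕ}

theorem riemannSum_sub_intervalIntegral (hab : a ≤ b) (hn : n ≠ 0)
    (hg : ContinuousOn g (Icc a b)) :
    riemannSum g a b n - ∫ x in a..b, g x = ∑ k ∈ Finset.range n,
      ∫ x in partitionPoint a b n k..partitionPoint a b n (k + 1),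
        (g (partitionPoint a b n k) - g x) := by
  have hint : ∀ k < n, IntervalIntegrable g volume (partitionPoint a b n k)
      (partitionPoint a b n (k + 1)) := fun k hk =>
    (hg.mono (uIcc_subset_Icc (partitionPoint_mem_Icc hab hk.le)
      (partitionPoint_mem_Icc hab hk))).intervalIntegrable
  have hsplit := intervalIntegral.sum_integral_adjacent_intervals hint
  rw [partitionPoint_zero, partitionPoint_self hn] at hsplit
  rw [← hsplit, riemannSum, Finset.smul_sum, ← Finset.sum_sub_distrib]
  refine Finset.sum_congr rfl fun k hk => ?_
  rw [intervalIntegral.integral_sub intervalIntegrable_const (hint k (Finset.mem_range.1 hk)),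
    intervalIntegral.integral_const, partitionPoint_succ_sub]

theorem norm_riemannSum_sub_intervalIntegral_le (hab : a ≤ b) (hn : n ≠ 0)
    (hg : ContinuousOn g (Icc a b))
    (hε : ∀ x ∈ Icc a b, ∀ y ∈ Icc a b, dist x y ≤ (b - a) / n → ‖g x - g y‖ ≤ ε) :
    ‖riemannSum g a b n - ∫ x in a..b, g x‖ ≤ (b - a) * ε := by
  have hmesh : 0 ≤ (b - a) / n := div_nonneg (sub_nonneg.2 hab) n.cast_nonneg
  have hpiece : ∀ k ∈ Finset.range n,
      ‖∫ x in partitionPoint a b n k..partitionPoint a b n (k + 1),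
        (g (partitionPoint a b n k) - g x)‖ ≤ ε * ((b - a) / n) := by
    intro k hk
    rw [Finset.mem_range] at hk
    have hlen := partitionPoint_succ_sub (a := a) (b := b) (n := n) k
    refine (intervalIntegral.norm_integral_le_of_norm_le_const fun x hx => ?_).trans_eq
      (by rw [hlen, abs_of_nonneg hmesh])
    rw [uIoc_of_le (by linarith)] at hx
    refine hε _ (partitionPoint_mem_Icc hab hk.le) _
      (Icc_subset_Icc (partitionPoint_mem_Icc hab hk.le).1 (partitionPoint_mem_Icc hab hk).2
        (Ioc_subset_Icc_self hx)) ?_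
    rw [Real.dist_eq, abs_sub_comm, abs_of_nonneg (by linarith [hx.1])]
    linarith [hx.2]
  calc ‖riemannSum g a b n - ∫ x in a..b, g x‖
      ≤ ∑ _k ∈ Finset.range n, ε * ((b - a) / n) := by
        rw [riemannSum_sub_intervalIntegral hab hn hg]
        exact (norm_sum_le _ _).trans (Finset.sum_le_sum hpiece)
    _ = (b - a) * ε := by
        rw [Finset.sum_const, Finset.card_range, nsmul_eq_mul]
        field_simp

theorem isRiemannIntegral_intervalIntegral (hab : a ≤ b) (hg : ContinuousOn g (Icc a b)) :
    IsRiemannIntegral g a b (∫ x in a..b, g x) := by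
  rw [isRiemannIntegral_iff, Metric.tendsto_nhds]
  intro ε hε
  have hε' : 0 < ε / (b - a + 1) := div_pos hε (by linarith)
  obtain ⟨δ, hδ, hgδ⟩ := Metric.uniformContinuousOn_iff_le.1
    (isCompact_Icc.uniformContinuousOn_of_continuous hg) _ hε'
  filter_upwards [(tendsto_const_div_atTop_nhds_zero_nat (b - a)).eventually (ge_mem_nhds hδ),
    eventually_ne_atTop 0] with n hmesh hn
  rw [dist_eq_norm]
  calc _ ≤ (b - a) * (ε / (b - a + 1)) :=
        norm_riemannSum_sub_intervalIntegral_le hab hn hg fun x hx y hy hxy => by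
          simpa only [dist_eq_norm] using hgδ x hx y hy (hxy.trans hmesh)
    _ < ε := by
        rw [mul_div_assoc', div_lt_iff₀ (by linarith)]
        nlinarith

end IntervalIntegral

section Dual

variable {E : Type*} [AddCommGroup E] [Module ℝ E] [TopologicalSpace E] {h : ℝ → E} {a b : ℝ}

theorem IsRiemannIntegral.eq_of_forall_dual [SeparatingDual ℝ E] {G : ℝ → E} {a' b' : ℝ}
    {I J : E} (hab : a ≤ b) (hab' : a' ≤ b') (hh : ContinuousOn h (Icc a b))
    (hG : ContinuousOn G (Icc a' b')) (hI : IsRiemannIntegral h a b I)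
    (hJ : IsRiemannIntegral G a' b' J)
    (hdual : ∀ ψ : StrongDual ℝ E, ∫ x in a..b, ψ (h x) = ∫ x in a'..b', ψ (G x)) : I = J :=
  (SeparatingDual.eq_iff_forall_dual_eq (R := ℝ)).2 fun ψ => by
    rw [(hI.map ψ).unique (isRiemannIntegral_intervalIntegral hab
        (ψ.continuous.comp_continuousOn hh)),
      (hJ.map ψ).unique (isRiemannIntegral_intervalIntegral hab'
        (ψ.continuous.comp_continuousOn hG)), hdual ψ]

end Dual

section LocallyConvex

open scoped Uniformity

variable {E : Type*} [AddCommGroup E] [Module ℝ E] {h : ℝ → E} {a b ε : ℝ}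

theorem seminorm_riemannSum_sub_riemannSum_mul_le (p : Seminorm ℝ E) (hab : a ≤ b) {n m : ℕ}
    (hn : n ≠ 0) (hm : m ≠ 0)
    (hε : ∀ x ∈ Icc a b, ∀ y ∈ Icc a b, dist x y ≤ (b - a) / n → p (h x - h y) ≤ ε) :
    p (riemannSum h a b n - riemannSum h a b (n * m)) ≤ (b - a) * ε := by
  have hn' : (n : ℝ) ≠ 0 := Nat.cast_ne_zero.2 hn
  have hm' : (m : ℝ) ≠ 0 := Nat.cast_ne_zero.2 hm
  set c := (b - a) / (n * m) with hc
  have hc0 : 0 ≤ c := div_nonneg (sub_nonneg.2 hab) (by positivity)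
  -- both sums run over the fine partition, each coarse sample being repeated `m` times
  have hcoarse : riemannSum h a b n =
      c • ∑ k ∈ Finset.range n, ∑ _r ∈ Finset.range m, h (partitionPoint a b n k) := by
    simp only [riemannSum, Finset.sum_const, Finset.card_range, ← Nat.cast_smul_eq_nsmul ℝ,
      ← Finset.smul_sum, smul_smul]
    congr 1
    rw [hc]
    field_simp
  have hfine : riemannSum h a b (n * m) = c • ∑ k ∈ Finset.range n, ∑ r ∈ Finset.range m,
      h (partitionPoint a b (n * m) (k * m + r)) := by
    rw [riemannSum, Finset.sum_range_mul_eq_sum_sum, Nat.cast_mul]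
  have hterm : ∀ k ∈ Finset.range n, ∀ r ∈ Finset.range m,
      p (h (partitionPoint a b n k) - h (partitionPoint a b (n * m) (k * m + r))) ≤ ε := by
    intro k hk r hr
    rw [Finset.mem_range] at hk hr
    have hkr : k * m + r ≤ n * m := by nlinarith
    refine hε _ (partitionPoint_mem_Icc hab hk.le) _ (partitionPoint_mem_Icc hab hkr) ?_
    rw [dist_comm, Real.dist_eq, partitionPoint_mul_add_sub hn hm,
      abs_of_nonneg (by have := sub_nonneg.2 hab; positivity), div_le_div_iff₀ (by positivity)
      (by positivity)]
    have hrm : (r : ℝ) ≤ m := by exact_mod_cast hr.le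
    have := mul_le_mul_of_nonneg_left hrm (mul_nonneg (sub_nonneg.2 hab) n.cast_nonneg)
    linarith
  calc p (riemannSum h a b n - riemannSum h a b (n * m))
      = c * p (∑ k ∈ Finset.range n, ∑ r ∈ Finset.range m,
          (h (partitionPoint a b n k) - h (partitionPoint a b (n * m) (k * m + r)))) := by
        simp only [hcoarse, hfine, ← smul_sub, ← Finset.sum_sub_distrib, map_smul_eq_mul,
          Real.norm_of_nonneg hc0]
    _ ≤ c * ∑ _k ∈ Finset.range n, ∑ _r ∈ Finset.range m, ε := by
        refine mul_le_mul_of_nonneg_left ?_ hc0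
        refine (Finset.le_sum_of_subadditive p (map_zero p).le (map_add_le_add p) _ _).trans
          (Finset.sum_le_sum fun k hk => ?_)
        exact (Finset.le_sum_of_subadditive p (map_zero p).le (map_add_le_add p) _ _).trans
          (Finset.sum_le_sum (hterm k hk))
    _ = (b - a) * ε := by
        simp only [Finset.sum_const, Finset.card_range, nsmul_eq_mul, hc]
        field_simp

variable [UniformSpace E] [IsUniformAddGroup E]

theorem exists_pos_seminorm_sub_le_of_continuousOn (p : Seminorm ℝ E) (hp : Continuous p)
    (hh : ContinuousOn h (Icc a b)) (hε : 0 < ε) :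
    ∃ δ > 0, ∀ x ∈ Icc a b, ∀ y ∈ Icc a b, dist x y ≤ δ → p (h x - h y) ≤ ε := by
  have hV : (fun q : E × E => q.2 - q.1) ⁻¹' p.ball 0 ε ∈ 𝓤 E := by
    rw [uniformity_eq_comap_nhds_zero E]
    exact preimage_mem_comap (p.ball_mem_nhds hp hε)
  have hmem := isCompact_Icc.uniformContinuousOn_of_continuous hh hV
  rw [mem_map, mem_inf_principal] at hmem
  obtain ⟨δ, hδ, hδV⟩ := Metric.mem_uniformity_dist.1 hmem
  refine ⟨δ / 2, half_pos hδ, fun x hx y hy hxy => ?_⟩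
  exact (p.mem_ball_zero.1 (hδV (a := y) (b := x) (by rw [dist_comm]; linarith) ⟨hy, hx⟩)).le

theorem cauchySeq_riemannSum {κ : Type*} [Nonempty κ] {Q : SeminormFamily ℝ E κ}
    (hQ : WithSeminorms Q) (hab : a ≤ b) (hh : ContinuousOn h (Icc a b)) :
    CauchySeq (riemannSum h a b) := by
  have hU : (𝓤 E).HasBasis (fun sr : Finset κ × ℝ => 0 < sr.2)
      fun sr => (fun q : E × E => q.2 - q.1) ⁻¹' (sr.1.sup Q).ball 0 sr.2 := by
    rw [uniformity_eq_comap_nhds_zero E]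
    exact hQ.hasBasis_zero_ball.comap _
  rw [hU.cauchySeq_iff]
  rintro ⟨s, r⟩ (hr : 0 < r)
  set p := s.sup Q
  set ε := r / (2 * (b - a) + 1) with hε
  have hε0 : 0 < ε := div_pos hr (by linarith)
  obtain ⟨δ, hδ, hhδ⟩ := exists_pos_seminorm_sub_le_of_continuousOn p
    (Seminorm.continuous_finsetSup fun i _ => hQ.continuous_seminorm i) hh hε0
  obtain ⟨N, hN⟩ := eventually_atTop.1
    (((tendsto_const_div_atTop_nhds_zero_nat (b - a)).eventually (ge_mem_nhds hδ)).and
      (eventually_ne_atTop 0))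
  have hrefine : ∀ n ≥ N, ∀ m ≠ 0,
      p (riemannSum h a b n - riemannSum h a b (n * m)) ≤ (b - a) * ε := fun n hn m hm =>
    seminorm_riemannSum_sub_riemannSum_mul_le p hab (hN n hn).2 hm fun x hx y hy hxy =>
      hhδ x hx y hy (hxy.trans (hN n hn).1)
  refine ⟨N, fun m hm n hn => ?_⟩
  have hsplit : riemannSum h a b n - riemannSum h a b m =
      (riemannSum h a b n - riemannSum h a b (n * m)) -
        (riemannSum h a b m - riemannSum h a b (m * n)) := by
    rw [mul_comm m n]
    abel
  rw [mem_preimage, p.mem_ball_zero, hsplit]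
  calc _ ≤ _ := map_sub_le_add p _ _
    _ ≤ 2 * ((b - a) * ε) := by
        linarith [hrefine n hn m (hN m hm).2, hrefine m hm n (hN n hn).2]
    _ < r := by
        rw [hε, ← mul_div_assoc, ← mul_div_assoc, div_lt_iff₀ (by linarith)]
        nlinarith

theorem exists_isRiemannIntegral [ContinuousSMul ℝ E] [LocallyConvexSpace ℝ E]
    (hsc : SeqComplete E) (hab : a ≤ b) (hh : ContinuousOn h (Icc a b)) :
    ∃ I, IsRiemannIntegral h a b I :=
  hsc _ (cauchySeq_riemannSum with_gaugeSeminormFamily hab hh)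

theorem isRiemannIntegral_of_delay [ContinuousSMul ℝ E] [LocallyConvexSpace ℝ E] [T2Space E]
    (hsc : SeqComplete E) {v V : ℝ → E} {t : ℝ} {J : E} (ht : 0 ≤ t) (htb : t ≤ b)
    (hv : ContinuousOn v (Icc 0 t)) (hV : ContinuousOn V (Icc 0 b))
    (hV0 : ∀ s ∈ Icc 0 (b - t), V s = 0) (hVv : ∀ s ∈ Icc (b - t) b, V s = v (s - (b - t)))
    (hJ : IsRiemannIntegral V 0 b J) : IsRiemannIntegral v 0 t J := by
  obtain ⟨I, hI⟩ := exists_isRiemannIntegral hsc ht hv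
  rwa [hI.eq_of_forall_dual ht (ht.trans htb) hv hV hJ fun ψ =>
    (intervalIntegral_eq_of_delay ht htb
      ((ψ.continuous.comp_continuousOn hV).intervalIntegrable_of_Icc (ht.trans htb))
      (fun s hs => by simp [hV0 s hs]) fun s hs => by simp [hVv s hs]).symm] at hI

theorem continuousOn_apply_sub_of_isLocallyEquicontinuous [ContinuousSMul ℝ E]
    [LocallyConvexSpace ℝ E] {T : ℝ → E →L[ℝ] E}
    (hT : ∀ x, ContinuousOn (fun t => T t x) (Ici 0)) (hTloc : IsLocallyEquicontinuous T)
    {t₀ c : ℝ} (ht₀ : 0 < t₀) (hc : c ≤ t₀) {u : ℝ → E} (hu : ContinuousOn u (Icc 0 c)) :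
    ContinuousOn (fun s => T (c - s) (u s)) (Icc 0 c) := by
  intro s₀ hs₀
  have hmaps : MapsTo (fun s => c - s) (Icc 0 c) (Icc 0 t₀) := fun s hs =>
    ⟨by linarith [hs.2], by linarith [hs.1]⟩
  have hmoving : Tendsto (fun s => T (c - s) (u s - u s₀)) (𝓝[Icc 0 c] s₀) (𝓝 0) := by
    have hgauge : WithSeminorms (gaugeSeminormFamily ℝ E) := with_gaugeSeminormFamily
    rw [hgauge.tendsto_nhds]
    intro i ε hε
    obtain ⟨q, hq, M, -, hM⟩ := hTloc t₀ ht₀ _ (hgauge.continuous_seminorm i)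
    have hsmall : Tendsto (fun s => M * q (u s - u s₀)) (𝓝[Icc 0 c] s₀) (𝓝 0) := by
      simpa using ((hq.tendsto 0).comp (tendsto_sub_nhds_zero_iff.2 (hu s₀ hs₀))).const_mul M
    filter_upwards [hsmall.eventually (gt_mem_nhds hε), self_mem_nhdsWithin] with s hs hsc
    rw [sub_zero]
    exact (hM _ _ (hmaps hsc)).trans_lt hs
  have hfixed : Tendsto (fun s => T (c - s) (u s₀)) (𝓝[Icc 0 c] s₀) (𝓝 (T (c - s₀) (u s₀))) :=
    ((hT (u s₀)).comp (by fun_prop) fun s hs => (hmaps hs).1) s₀ hs₀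
  simpa [ContinuousWithinAt] using hmoving.add hfixed

end LocallyConvex

section Delay

variable {E : Type*} {f : ℝ → E} {b c s : ℝ}

def delay (f : ℝ → E) (c s : ℝ) : E := f (max (s - c) 0)

theorem delay_of_le (hs : s ≤ c) : delay f c s = f 0 := by
  rw [delay, max_eq_right (by linarith)]

theorem delay_of_ge (hs : c ≤ s) : delay f c s = f (s - c) := by
  rw [delay, max_eq_left (by linarith)]

theorem max_sub_zero_mem_Icc (hs : s ∈ Icc 0 b) (hc : 0 ≤ c) : max (s - c) 0 ∈ Icc 0 b :=
  ⟨le_max_right _ _, max_le (by linarith [hs.2]) (hs.1.trans hs.2)⟩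

theorem continuousOn_delay [TopologicalSpace E] (hf : ContinuousOn f (Icc 0 b)) (hc : 0 ≤ c) :
    ContinuousOn (delay f c) (Icc 0 b) :=
  hf.comp (by fun_prop : Continuous fun s : ℝ => max (s - c) 0).continuousOn
    fun _ hs => max_sub_zero_mem_Icc hs hc

theorem seminorm_delay_sub_delay_le [AddCommGroup E] [Module ℝ E] (p : Seminorm ℝ E) {c' d ε : ℝ}
    (hf : ∀ x ∈ Icc 0 b, ∀ y ∈ Icc 0 b, dist x y ≤ d → p (f x - f y) ≤ ε)
    (hs : s ∈ Icc 0 b) (hc : 0 ≤ c) (hc' : 0 ≤ c') (hcc' : dist c c' ≤ d) :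
    p (delay f c' s - delay f c s) ≤ ε := by
  refine hf _ (max_sub_zero_mem_Icc hs hc') _ (max_sub_zero_mem_Icc hs hc) ?_
  rw [Real.dist_eq]
  refine (abs_max_sub_max_le_abs _ _ _).trans ?_
  rwa [sub_sub_sub_cancel_left, ← Real.dist_eq]

theorem continuousOn_of_seminorm_sub_le_iSup_delay [AddCommGroup E] [Module ℝ E] [UniformSpace E]
    [IsUniformAddGroup E] {ι : Type*} [Nonempty ι] {Γ : SeminormFamily ℝ E ι}
    (hΓ : WithSeminorms Γ) {g : ℝ → E} (hf : ContinuousOn f (Icc 0 b))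
    (hg : ∀ i, ∃ K, 0 ≤ K ∧ ∀ t ∈ Icc 0 b, ∀ t' ∈ Icc 0 b,
      Γ i (g t' - g t) ≤ K * ⨆ s ∈ Icc 0 b, Γ i (delay f (b - t') s - delay f (b - t) s)) :
    ContinuousOn g (Icc 0 b) := by
  intro t ht
  rw [ContinuousWithinAt, hΓ.tendsto_nhds]
  intro i ε hε
  obtain ⟨K, hK, hgK⟩ := hg i
  have hε' : 0 < ε / (K + 1) := div_pos hε (by linarith)
  obtain ⟨δ, hδ, hfδ⟩ :=
    exists_pos_seminorm_sub_le_of_continuousOn (Γ i) (hΓ.continuous_seminorm i) hf hε'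
  filter_upwards [self_mem_nhdsWithin, nhdsWithin_le_nhds (Metric.closedBall_mem_nhds t hδ)]
    with t' ht' hdist
  have hsup : ⨆ s ∈ Icc 0 b, Γ i (delay f (b - t') s - delay f (b - t) s) ≤ ε / (K + 1) :=
    Real.iSup_le (fun s => Real.iSup_le (fun hs => seminorm_delay_sub_delay_le (Γ i) hfδ hs
      (by linarith [ht.2]) (by linarith [ht'.2])
      (by rwa [Real.dist_eq, sub_sub_sub_cancel_left, ← Real.dist_eq])) hε'.le) hε'.le
  calc Γ i (g t' - g t) ≤ K * (ε / (K + 1)) :=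
        (hgK t ht t' ht').trans (mul_le_mul_of_nonneg_left hsup hK)
    _ < ε := by
        rw [mul_div_assoc', div_lt_iff₀ (by linarith)]
        linarith

end Delay

end DS

end

theorem RB_well_defined_general
    {X Xb : Type*} {ι : Type*} [Nonempty ι]
    [AddCommGroup X] [Module ℝ X] [UniformSpace X] [IsUniformAddGroup X]
    [AddCommGroup Xb] [Module ℝ Xb] [UniformSpace Xb] [IsUniformAddGroup Xb]
    [ContinuousSMul ℝ Xb] [T2Space Xb] [LocallyConvexSpace ℝ Xb]
    (hXbsc : SeqComplete Xb)
    (Γ : SeminormFamily ℝ X ι) (hΓ : WithSeminorms Γ)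
    (e : X →L[ℝ] Xb) (he : Function.Injective e)
    (Tb : ℝ → Xb →L[ℝ] Xb) (hTb : IsC0Semigroup Tb) (hTbloc : IsLocallyEquicontinuous Tb)
    (B : X →L[ℝ] Xb)
    (t₀ : ℝ) (ht₀ : 0 < t₀)
    -- condition (c): the integral `∫₀^{t₀} T̄(t₀ - t) B f(t) dt` belongs to `X`
    (hc : ∀ f : ℝ → X, ContinuousOn f (Icc (0 : ℝ) t₀) →
      ∃ x : X, IsRiemannIntegral (fun t : ℝ => Tb (t₀ - t) (B (f t))) 0 t₀ (e x))
    -- condition (d): `p(∫₀^{t₀} T̄(t₀ - t) B f(t) dt) ≤ K · sup_{t ∈ [0,t₀]} p(f t)`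
    (hd : ∀ i : ι, ∃ K : ℝ, K ∈ Ioo (0 : ℝ) 1 ∧
      ∀ f : ℝ → X, ContinuousOn f (Icc (0 : ℝ) t₀) → ∀ x : X,
        IsRiemannIntegral (fun t : ℝ => Tb (t₀ - t) (B (f t))) 0 t₀ (e x) →
          Γ i x ≤ K * ⨆ t ∈ Icc (0 : ℝ) t₀, Γ i (f t))
    :
    ∀ f : ℝ → X, MemXc t₀ f → ∃ g : ℝ → X, MemXc t₀ g ∧
      ∀ t ∈ Icc (0 : ℝ) t₀,
        IsRiemannIntegral (fun s : ℝ => Tb (t - s) (B (f s))) 0 t (e (g t)) := by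
  rintro f ⟨hf, hf0⟩
  have hdelay : ∀ t ∈ Icc 0 t₀, ContinuousOn (delay f (t₀ - t)) (Icc 0 t₀) := fun t ht =>
    continuousOn_delay hf (by linarith [ht.2])
  choose! g hg using fun t ht => hc _ (hdelay t ht)
  have hint : ∀ t ∈ Icc (0 : ℝ) t₀,
      IsRiemannIntegral (fun s => Tb (t - s) (B (f s))) 0 t (e (g t)) := fun t ht =>
    isRiemannIntegral_of_delay hXbsc ht.1 ht.2
      (continuousOn_apply_sub_of_isLocallyEquicontinuous hTb.2.2 hTbloc ht₀ ht.2
        (B.continuous.comp_continuousOn (hf.mono (Icc_subset_Icc le_rfl ht.2))))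
      (continuousOn_apply_sub_of_isLocallyEquicontinuous hTb.2.2 hTbloc ht₀ le_rfl
        (B.continuous.comp_continuousOn (hdelay t ht)))
      (fun s hs => by rw [Function.comp_apply, delay_of_le hs.2, hf0, map_zero, map_zero])
      (fun s hs => by
        rw [Function.comp_apply, delay_of_ge hs.1, show t - (s - (t₀ - t)) = t₀ - s by ring])
      (hg t ht)
  refine ⟨g, ⟨?_, he ?_⟩, hint⟩
  · refine continuousOn_of_seminorm_sub_le_iSup_delay hΓ hf fun i => ?_
    obtain ⟨K, hK, hdK⟩ := hd i
    refine ⟨K, hK.1.le, fun t ht t' ht' => hdK _ ((hdelay t' ht').sub (hdelay t ht)) _ ?_⟩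
    simpa only [Pi.sub_apply, map_sub] using (hg t' ht').sub (hg t ht)
  · rw [(hint 0 ⟨le_rfl, ht₀.le⟩).unique (isRiemannIntegral_self _ 0), map_zero]

/-- Under the standing assumptions of the Desch–Schappacher theorem, for every `f ∈ 𝒳`
the element `(R̄ℬ f)(t) = ∫₀ᵗ T̄(t-s) B f(s) ds` belongs to `X` for every `t ∈ [0,t₀]`,
and the resulting map `t ↦ (R̄ℬ f)(t)` is continuous on `[0,t₀]` and vanishes at `t = 0`;
hence `R̄ℬ` is a well-defined map from `𝒳` into `𝒳`. -/
theorem RB_well_defined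
    {X Xb : Type*} {ι : Type*} [Nonempty ι]
    [AddCommGroup X] [Module ℝ X] [UniformSpace X] [IsUniformAddGroup X]
    [ContinuousSMul ℝ X] [T2Space X]
    [AddCommGroup Xb] [Module ℝ Xb] [UniformSpace Xb] [IsUniformAddGroup Xb]
    [ContinuousSMul ℝ Xb] [T2Space Xb] [LocallyConvexSpace ℝ Xb]
    (hXsc : SeqComplete X) (hXbsc : SeqComplete Xb)
    (Γ : SeminormFamily ℝ X ι) (hΓ : WithSeminorms Γ)
    (T : ℝ → X →L[ℝ] X) (hT : IsC0Semigroup T) (hTloc : IsLocallyEquicontinuous T)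
    (domA : Set X) (A : X → X) (hA : IsGenerator T domA A)
    (e : X →L[ℝ] Xb) (he : Function.Injective e) (hedense : DenseRange e)
    (Tb : ℝ → Xb →L[ℝ] Xb) (hTb : IsC0Semigroup Tb) (hTbloc : IsLocallyEquicontinuous Tb)
    (Ab : Xb → Xb) (hAb : IsGenerator Tb (Set.range e) Ab)
    (hTbe : ∀ t : ℝ, 0 ≤ t → ∀ x : X, Tb t (e x) = e (T t x))
    (B : X →L[ℝ] Xb)
    (t₀ : ℝ) (ht₀ : 0 < t₀)
    -- condition (c): the integral `∫₀^{t₀} T̄(t₀ - t) B f(t) dt` belongs to `X`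
    (hc : ∀ f : ℝ → X, ContinuousOn f (Icc (0 : ℝ) t₀) →
      ∃ x : X, IsRiemannIntegral (fun t : ℝ => Tb (t₀ - t) (B (f t))) 0 t₀ (e x))
    -- condition (d): `p(∫₀^{t₀} T̄(t₀ - t) B f(t) dt) ≤ K · sup_{t ∈ [0,t₀]} p(f t)`
    (hd : ∀ i : ι, ∃ K : ℝ, K ∈ Ioo (0 : ℝ) 1 ∧
      ∀ f : ℝ → X, ContinuousOn f (Icc (0 : ℝ) t₀) → ∀ x : X,
        IsRiemannIntegral (fun t : ℝ => Tb (t₀ - t) (B (f t))) 0 t₀ (e x) →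
          Γ i x ≤ K * ⨆ t ∈ Icc (0 : ℝ) t₀, Γ i (f t))
    :
    ∀ f : ℝ → X, MemXc t₀ f → ∃ g : ℝ → X, MemXc t₀ g ∧
      ∀ t ∈ Icc (0 : ℝ) t₀,
        IsRiemannIntegral (fun s : ℝ => Tb (t - s) (B (f s))) 0 t (e (g t)) :=
  RB_well_defined_general hXbsc Γ hΓ e he Tb hTb hTbloc B t₀ ht₀ hc hd
end

section
/- Under the standing assumptions, assume additionally that D(C) is dense in X. Let 𝒟f = f′ on D(𝒟) = {f ∈ 𝒳 ∩ C¹([0,t₀],X) : f′(0) = 0} and let 𝒞 be the operator (𝒞f)(t) = C f(t) on D(𝒞) = {f ∈ 𝒳 : f(t) ∈ D(C) for all t and t ↦ C f(t) is continuous}, where C x = Ā x + B x on D(C) = {x ∈ X : Ā x + B x ∈ X}. Then D(𝒟) ∩ D(𝒞) is dense in D(𝒟) with respect to the graph topology on D(𝒟) generated by the seminorms f ↦ p^∞(f) + p^∞(f′), p ∈ Γ. -/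
open Filter Topology Set MeasureTheory

open DS

/-! Approximate `f'` uniformly, in the continuous seminorm `sup_{i ∈ s} Γ i`, by a piecewise linear
interpolant `g' = ∑ₖ ψₖ(t) • yₖ` built from hat functions `φₖ` on a fine mesh, with nodal values
`yₖ` in the dense set `D(C)` (and `y₀ = 0`, as `f' 0 = 0`), and put `g t = ∫₀ᵗ g'`. Additivity of
the generator `Ā` on its domain `X` makes `D(C)` a subspace on which `C` is linear, so
`g t = ∑ₖ (∫₀ᵗ ψₖ) • yₖ ∈ D(C)` and `C (g t) = ∑ₖ (∫₀ᵗ ψₖ) • C yₖ` is continuous. The mean value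
inequality for the seminorm turns the bound on `f' - g'` into one on `f - g`. -/

namespace DS

def hat (y : ℝ) : ℝ := max 0 (1 - |y|)

theorem continuous_hat : Continuous hat :=
  continuous_const.max (continuous_const.sub continuous_abs)

theorem hat_nonneg (y : ℝ) : 0 ≤ hat y := le_max_left _ _

theorem hat_eq_zero {y : ℝ} (hy : 1 ≤ |y|) : hat y = 0 := max_eq_left (by linarith)

theorem abs_lt_one_of_hat_pos {y : ℝ} (hy : 0 < hat y) : |y| < 1 := by
  contrapose! hy
  exact (hat_eq_zero hy).le

theorem hat_add_hat_sub_one {x : ℝ} (hx : x ∈ Icc (0 : ℝ) 1) : hat x + hat (x - 1) = 1 := by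
  rw [hat, hat, abs_of_nonneg hx.1, abs_of_nonpos (by linarith [hx.2]),
    max_eq_right (by linarith [hx.2]), max_eq_right (by linarith [hx.1])]
  ring

theorem sum_range_hat_sub_natCast {n : ℕ} {x : ℝ} (hx : x ∈ Icc (0 : ℝ) n) :
    ∑ k ∈ Finset.range (n + 1), hat (x - k) = 1 := by
  induction n generalizing x with
  | zero =>
    obtain rfl : x = 0 := le_antisymm (by simpa using hx.2) hx.1
    simp [hat]
  | succ n ih =>
    rw [Finset.sum_range_succ]
    rcases le_or_gt x n with hxn | hxn
    · rw [ih ⟨hx.1, hxn⟩, hat_eq_zero (by rw [abs_of_nonpos] <;> push_cast <;> linarith)]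
      ring
    · have hsmall : ∀ k ∈ Finset.range n, hat (x - k) = 0 := fun k hk => by
        have : (k : ℝ) + 1 ≤ n := by exact_mod_cast Finset.mem_range.mp hk
        exact hat_eq_zero (by rw [abs_of_nonneg] <;> linarith)
      have hpair := hat_add_hat_sub_one (x := x - n)
        ⟨by linarith, by push_cast at hx; linarith [hx.2]⟩
      rw [Finset.sum_range_succ, Finset.sum_eq_zero hsmall, zero_add, ← hpair]
      push_cast
      ring_nf

section Seminorm

variable {X : Type*} [AddCommGroup X] [Module ℝ X] (q : Seminorm ℝ X)

theorem _root_.Seminorm.sub_sum_smul_le {ι : Type*} {s : Finset ι} {w : ι → ℝ} {x : X} {y : ι → X}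
    {η : ℝ} (hw : ∀ i ∈ s, 0 ≤ w i) (hw₁ : ∑ i ∈ s, w i = 1)
    (hy : ∀ i ∈ s, 0 < w i → q (x - y i) ≤ η) : q (x - ∑ i ∈ s, w i • y i) ≤ η :=
  calc q (x - ∑ i ∈ s, w i • y i) = q (∑ i ∈ s, w i • (x - y i)) := by
        simp only [smul_sub, Finset.sum_sub_distrib, ← Finset.sum_smul, hw₁, one_smul]
    _ ≤ ∑ i ∈ s, q (w i • (x - y i)) :=
        Finset.le_sum_of_subadditive q (map_zero q).le (map_add_le_add q) s _
    _ ≤ ∑ i ∈ s, w i * η := Finset.sum_le_sum fun i hi => by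
        rw [map_smul_eq_mul, Real.norm_of_nonneg (hw i hi)]
        rcases (hw i hi).eq_or_lt with h | h
        · simp [← h]
        · exact mul_le_mul_of_nonneg_left (hy i hi h) h.le
    _ = η := by rw [← Finset.sum_mul, hw₁, one_mul]

variable [TopologicalSpace X] [IsTopologicalAddGroup X] {q}

theorem _root_.Dense.exists_seminorm_sub_lt (hq : Continuous q) {D : Set X} (hD : Dense D) (x : X)
    {r : ℝ} (hr : 0 < r) : ∃ z ∈ D, q (x - z) < r :=
  hD.inter_nhds_nonempty <| (hq.comp (continuous_const.sub continuous_id)).continuousAt (x := x)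
    |>.preimage_mem_nhds (Iio_mem_nhds (by simpa using hr))

end Seminorm

theorem _root_.Real.biSup_le {α : Type*} {S : Set α} {f : α → ℝ} {c : ℝ} (hc : 0 ≤ c)
    (h : ∀ t ∈ S, f t ≤ c) : ⨆ t ∈ S, f t ≤ c :=
  Real.iSup_le (fun t => Real.iSup_le (h t) hc) hc

section Approximation

variable {X : Type*} [AddCommGroup X] [Module ℝ X] [UniformSpace X] [IsUniformAddGroup X]
  {q : Seminorm ℝ X}

theorem _root_.ContinuousOn.exists_seminorm_sub_lt (hq : Continuous q) {φ : ℝ → X} {a b : ℝ}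
    (hφ : ContinuousOn φ (Icc a b)) {r : ℝ} (hr : 0 < r) :
    ∃ δ > 0, ∀ s ∈ Icc a b, ∀ t ∈ Icc a b, |s - t| < δ → q (φ t - φ s) < r := by
  have hV : {p : X × X | q (p.2 - p.1) < r} ∈ uniformity X := by
    rw [uniformity_eq_comap_nhds_zero X]
    exact preimage_mem_comap <|
      (hq.continuousAt (x := 0)).preimage_mem_nhds (Iio_mem_nhds (by simpa using hr))
  obtain ⟨δ, hδ, h⟩ :=
    (Metric.uniformity_basis_dist.uniformContinuousOn_iff (uniformity X).basis_sets).1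
      (isCompact_Icc.uniformContinuousOn_of_continuous hφ) _ hV
  exact ⟨δ, hδ, fun s hs t ht hst => h s hs t ht (by simpa [Real.dist_eq] using hst)⟩

theorem exists_sum_smul_seminorm_sub_le (hq : Continuous q) {D : Submodule ℝ X}
    (hD : Dense (D : Set X)) {φ : ℝ → X} {b η : ℝ} (hb : 0 < b) (hη : 0 < η)
    (hφ : ContinuousOn φ (Icc 0 b)) (hφ0 : φ 0 = 0) :
    ∃ (n : ℕ) (ψ : ℕ → ℝ → ℝ) (y : ℕ → X), (∀ k, Continuous (ψ k)) ∧ (∀ k, y k ∈ D) ∧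
      ∑ k ∈ Finset.range n, ψ k 0 • y k = 0 ∧
      ∀ t ∈ Icc 0 b, q (φ t - ∑ k ∈ Finset.range n, ψ k t • y k) ≤ η := by
  obtain ⟨δ₀, hδ₀, hφδ₀⟩ := hφ.exists_seminorm_sub_lt hq (half_pos hη)
  obtain ⟨m, hm⟩ := exists_nat_gt (b / δ₀)
  have hm0 : (0 : ℝ) < m := (div_pos hb hδ₀).trans hm
  set δ := b / m
  have hδ : 0 < δ := div_pos hb hm0
  have hδδ₀ : δ < δ₀ := by rwa [div_lt_iff₀ hm0, mul_comm, ← div_lt_iff₀ hδ₀]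
  have hmδ : m * δ = b := mul_div_cancel₀ b hm0.ne'
  choose z hzD hz using fun x : X => hD.exists_seminorm_sub_lt hq x (half_pos hη)
  -- `y 0 = 0` makes the interpolant vanish at `t = 0`
  set y : ℕ → X := fun k => if k = 0 then 0 else z (φ (k * δ))
  have hyD : ∀ k, y k ∈ D := fun k => by
    by_cases hk : k = 0
    · simp [y, hk]
    · simpa [y, hk] using hzD _
  have hy : ∀ k : ℕ, q (φ (k * δ) - y k) < η / 2 := fun k => by
    by_cases hk : k = 0 <;> simp [y, hk, hφ0, hz, half_pos hη]
  refine ⟨m + 1, fun k t => hat (t / δ - k), y, fun k => continuous_hat.comp (by fun_prop), hyD,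
    Finset.sum_eq_zero fun k _ => ?_, fun t ht => ?_⟩
  · rcases Nat.eq_zero_or_pos k with rfl | hk
    · simp [y]
    · show hat (0 / δ - k) • y k = 0
      rw [hat_eq_zero (by rw [zero_div, zero_sub, abs_neg, Nat.abs_cast]; exact_mod_cast hk),
        zero_smul]
  have ht' : t / δ ∈ Icc (0 : ℝ) m :=
    ⟨div_nonneg ht.1 hδ.le, by rw [div_le_iff₀ hδ, hmδ]; exact ht.2⟩
  refine q.sub_sum_smul_le (fun k _ => hat_nonneg _) (sum_range_hat_sub_natCast ht')
    fun k hk hpos => ?_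
  have hkδ : (k : ℝ) * δ ∈ Icc 0 b := ⟨by positivity, by
    rw [← hmδ]
    exact mul_le_mul_of_nonneg_right
      (by exact_mod_cast Nat.lt_succ_iff.mp (Finset.mem_range.mp hk)) hδ.le⟩
  have hdist : |k * δ - t| < δ₀ := by
    rw [abs_sub_comm, show t - k * δ = δ * (t / δ - k) by field_simp, abs_mul, abs_of_pos hδ]
    exact ((mul_lt_iff_lt_one_right hδ).2 (abs_lt_one_of_hat_pos hpos)).trans hδδ₀
  calc q (φ t - y k) ≤ q (φ t - φ (k * δ)) + q (φ (k * δ) - y k) := by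
        simpa using map_add_le_add q (φ t - φ (k * δ)) (φ (k * δ) - y k)
    _ ≤ η / 2 + η / 2 := add_le_add (hφδ₀ _ hkδ _ ht hdist).le (hy k).le
    _ = η := add_halves η

end Approximation

section Derivative

variable {E : Type*} [AddCommGroup E] [Module ℝ E] [TopologicalSpace E] {s : Set ℝ} {t : ℝ}

theorem HasDerivWithinAtLC.sub [ContinuousSub E] {f g : ℝ → E} {f' g' : E}
    (hf : HasDerivWithinAtLC f f' s t) (hg : HasDerivWithinAtLC g g' s t) :
    HasDerivWithinAtLC (fun u => f u - g u) (f' - g') s t := by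
  simpa only [HasDerivWithinAtLC, ← smul_sub, sub_sub_sub_comm] using Tendsto.sub hf hg

theorem HasDerivWithinAtLC.sum [ContinuousAdd E] {ι : Type*} {I : Finset ι} {f : ι → ℝ → E}
    {f' : ι → E} (hf : ∀ i ∈ I, HasDerivWithinAtLC (f i) (f' i) s t) :
    HasDerivWithinAtLC (fun u => ∑ i ∈ I, f i u) (∑ i ∈ I, f' i) s t := by
  simpa only [HasDerivWithinAtLC, ← Finset.sum_sub_distrib, ← Finset.smul_sum]
    using tendsto_finsetSum I hf

theorem _root_.HasDerivAt.hasDerivWithinAtLC_smul_const [ContinuousSMul ℝ E] {c : ℝ → ℝ} {c' : ℝ}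
    (hc : HasDerivAt c c' t) (y : E) : HasDerivWithinAtLC (fun u => c u • y) (c' • y) s t := by
  refine ((hasDerivAt_iff_tendsto_slope.mp hc).smul_const y).mono_left
    (nhdsWithin_mono t fun u hu => hu.2) |>.congr fun u => ?_
  rw [slope_def_field, div_eq_inv_mul, ← smul_smul, sub_smul]

theorem memDD_sum_integral_smul [ContinuousAdd E] [ContinuousSMul ℝ E] {ι : Type*} {I : Finset ι}
    {ψ : ι → ℝ → ℝ} (hψ : ∀ i, Continuous (ψ i)) (y : ι → E) (h0 : ∑ i ∈ I, ψ i 0 • y i = 0)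
    (t₀ : ℝ) :
    MemDD t₀ (fun t => ∑ i ∈ I, (∫ u in (0 : ℝ)..t, ψ i u) • y i)
      (fun t => ∑ i ∈ I, ψ i t • y i) := by
  have hΨ : ∀ i t, HasDerivAt (fun t => ∫ u in (0 : ℝ)..t, ψ i u) (ψ i t) t := fun i t =>
    ((hψ i).integral_hasStrictDerivAt 0 t).hasDerivAt
  refine ⟨⟨Continuous.continuousOn ?_, by simp⟩, fun t _ => HasDerivWithinAtLC.sum fun i _ =>
      (hΨ i t).hasDerivWithinAtLC_smul_const (y i), by fun_prop, h0⟩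
  exact continuous_finsetSum I fun i _ =>
    (continuous_iff_continuousAt.2 fun t => (hΨ i t).continuousAt).smul continuous_const

end Derivative

section MeanValue

variable {X : Type*} [AddCommGroup X] [Module ℝ X] [TopologicalSpace X] [IsTopologicalAddGroup X]
  {q : Seminorm ℝ X}

theorem seminorm_image_sub_le_of_seminorm_deriv_le_segment (hq : Continuous q) {u u' : ℝ → X}
    {a b M : ℝ} (hu : ContinuousOn u (Icc a b))
    (hu' : ∀ t ∈ Icc a b, HasDerivWithinAtLC u (u' t) (Icc a b) t)
    (hM : ∀ t ∈ Icc a b, q (u' t) ≤ M) : ∀ t ∈ Icc a b, q (u t - u a) ≤ M * (t - a) := by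
  refine image_le_of_liminf_slope_right_le_deriv_boundary
    (hq.comp_continuousOn (hu.sub continuousOn_const)) (by simp) (by fun_prop)
    (fun x _ => (((hasDerivAt_id x).sub_const a).const_mul M).hasDerivWithinAt.congr_deriv
      (mul_one M)) fun x hx r hr => ?_
  have hlim : Tendsto (fun z => q ((z - x)⁻¹ • (u z - u x))) (𝓝[>] x) (𝓝 (q (u' x))) :=
    ((hq.tendsto _).comp (hu' x (Ico_subset_Icc_self hx))).mono_left <| nhdsWithin_le_of_mem <|
      mem_of_superset (Ioo_mem_nhdsGT hx.2) fun z hz =>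
        ⟨⟨hx.1.trans hz.1.le, hz.2.le⟩, hz.1.ne'⟩
  refine ((hlim.eventually (gt_mem_nhds ((hM x (Ico_subset_Icc_self hx)).trans_lt hr))).and
    self_mem_nhdsWithin).frequently.mono fun z ⟨hz, hxz⟩ => hz.trans_le' ?_
  have hxz : 0 < z - x := sub_pos.2 hxz
  rw [slope_def_field, map_smul_eq_mul, Real.norm_of_nonneg (inv_nonneg.2 hxz.le),
    div_eq_inv_mul]
  refine mul_le_mul_of_nonneg_left ?_ (inv_nonneg.2 hxz.le)
  simpa using map_add_le_add q (u z - u x) (u x - u a)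

end MeanValue

section Generator

variable {E : Type*} [AddCommGroup E] [Module ℝ E] [TopologicalSpace E] [T2Space E]
  {T : ℝ → E →L[ℝ] E} {D : Set E} {A : E → E}

theorem IsGenerator.map_add [ContinuousAdd E] (hA : IsGenerator T D A) {x y : E} (hx : x ∈ D)
    (hy : y ∈ D) : A (x + y) = A x + A y := by
  have h : Tendsto (fun t : ℝ => t⁻¹ • (T t (x + y) - (x + y))) (𝓝[>] 0) (𝓝 (A x + A y)) :=
    ((hA.2 x hx).add (hA.2 y hy)).congr fun t => by rw [_root_.map_add, add_sub_add_comm, smul_add]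
  exact tendsto_nhds_unique (hA.2 _ ((hA.1 _).2 ⟨_, h⟩)) h

theorem IsGenerator.map_smul [ContinuousConstSMul ℝ E] (hA : IsGenerator T D A) (c : ℝ) {x : E}
    (hx : x ∈ D) : A (c • x) = c • A x := by
  have h : Tendsto (fun t : ℝ => t⁻¹ • (T t (c • x) - c • x)) (𝓝[>] 0) (𝓝 (c • A x)) :=
    ((hA.2 x hx).const_smul c).congr fun t => by rw [_root_.map_smul, ← smul_sub, smul_comm]
  exact tendsto_nhds_unique (hA.2 _ ((hA.1 _).2 ⟨_, h⟩)) h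

def IsGenerator.compLinearMap [ContinuousAdd E] [ContinuousConstSMul ℝ E] {X F : Type*}
    [AddCommGroup X] [Module ℝ X] [FunLike F X E] [LinearMapClass F ℝ X E] {e : F}
    (hA : IsGenerator T (range e) A) : X →ₗ[ℝ] E where
  toFun x := A (e x)
  map_add' x y := by rw [_root_.map_add e]; exact hA.map_add ⟨x, rfl⟩ ⟨y, rfl⟩
  map_smul' c x := by rw [_root_.map_smul e]; exact hA.map_smul c ⟨x, rfl⟩

end Generator

theorem map_sum_smul_of_injective_comp_eq {R X Y F ι : Type*} [Semiring R] [AddCommMonoid X]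
    [Module R X] [AddCommMonoid Y] [Module R Y] [FunLike F X Y] [LinearMapClass F R X Y] {e : F}
    (he : Function.Injective e) {L : X →ₗ[R] Y} {D : Submodule R X} {C : X → X}
    (hC : ∀ x ∈ D, e (C x) = L x) {I : Finset ι} (c : ι → R) {y : ι → X}
    (hy : ∀ i ∈ I, y i ∈ D) : C (∑ i ∈ I, c i • y i) = ∑ i ∈ I, c i • C (y i) := by
  apply he
  rw [hC _ (D.sum_mem fun i hi => D.smul_mem _ (hy i hi)), map_sum, map_sum]
  exact Finset.sum_congr rfl fun i hi => by rw [map_smul, map_smul, hC _ (hy i hi)]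

theorem memDA_sum_smul {X Y F ι : Type*} [AddCommGroup X] [Module ℝ X] [TopologicalSpace X]
    [ContinuousAdd X] [ContinuousSMul ℝ X] [AddCommMonoid Y] [Module ℝ Y] [FunLike F X Y]
    [LinearMapClass F ℝ X Y] {e : F} (he : Function.Injective e) {L : X →ₗ[ℝ] Y}
    {D : Submodule ℝ X} {C : X → X} (hC : ∀ x ∈ D, e (C x) = L x) {I : Finset ι}
    {c : ι → ℝ → ℝ} (hc : ∀ i, Continuous (c i)) (hc0 : ∀ i, c i 0 = 0) {y : ι → X}
    (hy : ∀ i ∈ I, y i ∈ D) (t₀ : ℝ) : MemDA t₀ D C (fun t => ∑ i ∈ I, c i t • y i) := by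
  refine ⟨⟨by fun_prop, by simp [hc0]⟩, fun t _ => D.sum_mem fun i hi => D.smul_mem _ (hy i hi),
    ?_⟩
  simp only [map_sum_smul_of_injective_comp_eq he hC _ hy]
  fun_prop

end DS

theorem dense_in_graph_topology_general
    {X Xb : Type*} {ι : Type*}
    [AddCommGroup X] [Module ℝ X] [UniformSpace X] [IsUniformAddGroup X]
    [ContinuousSMul ℝ X]
    [AddCommGroup Xb] [Module ℝ Xb] [UniformSpace Xb] [IsUniformAddGroup Xb]
    [ContinuousSMul ℝ Xb] [T2Space Xb]
    (Γ : SeminormFamily ℝ X ι) (hΓ : WithSeminorms Γ)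
    (e : X →L[ℝ] Xb) (he : Function.Injective e)
    (Tb : ℝ → Xb →L[ℝ] Xb)
    (Ab : Xb → Xb) (hAb : IsGenerator Tb (Set.range e) Ab)
    (B : X →L[ℝ] Xb)
    (t₀ : ℝ) (ht₀ : 0 < t₀)
    -- the perturbed operator `C = (Ā + B)|_X`
    (domC : Set X) (hdomC : domC = {x : X | ∃ y : X, e y = Ab (e x) + B x})
    (C : X → X) (hC : ∀ x ∈ domC, e (C x) = Ab (e x) + B x)
    (hdense : Dense domC) :
    ∀ f f' : ℝ → X, MemDD t₀ f f' → ∀ ε : ℝ, 0 < ε → ∀ s : Finset ι,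
      ∃ g g' : ℝ → X, MemDD t₀ g g' ∧ MemDA t₀ domC C g ∧
        ∀ i ∈ s, (⨆ t ∈ Icc (0 : ℝ) t₀, Γ i (f t - g t)) +
          (⨆ t ∈ Icc (0 : ℝ) t₀, Γ i (f' t - g' t)) < ε := by
  intro f f' ⟨⟨hfc, hf0⟩, hf', hf'c, hf'0⟩ ε hε s
  set q := s.sup Γ
  have hq : Continuous q := Seminorm.continuous_finsetSup fun i _ => hΓ.continuous_seminorm i
  set L : X →ₗ[ℝ] Xb := hAb.compLinearMap + B
  set D := (LinearMap.range (e : X →ₗ[ℝ] Xb)).comap L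
  have hD : (D : Set X) = domC := hdomC ▸ rfl
  have hCD : ∀ x ∈ D, e (C x) = L x := fun x hx => hC x (hD ▸ hx)
  set η := ε / (t₀ + 2)
  have hη : 0 < η := by positivity
  obtain ⟨n, ψ, y, hψ, hyD, hψy0, hf'g'⟩ :=
    exists_sum_smul_seminorm_sub_le hq (hD ▸ hdense) ht₀ hη hf'c hf'0
  set g' : ℝ → X := fun t => ∑ k ∈ Finset.range n, ψ k t • y k
  set g : ℝ → X := fun t => ∑ k ∈ Finset.range n, (∫ u in (0 : ℝ)..t, ψ k u) • y k
  have hg : MemDD t₀ g g' := memDD_sum_integral_smul hψ y hψy0 t₀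
  have hgC : MemDA t₀ domC C g := hD ▸ memDA_sum_smul he hCD
    (fun k => intervalIntegral.continuous_primitive (hψ k).intervalIntegrable 0)
    (fun k => intervalIntegral.integral_same) (fun k _ => hyD k) t₀
  have hfg : ∀ t ∈ Icc 0 t₀, q (f t - g t) ≤ η * t₀ := fun t ht => by
    have := seminorm_image_sub_le_of_seminorm_deriv_le_segment hq (hfc.sub hg.1.1)
      (fun t ht => (hf' t ht).sub (hg.2.1 t ht)) hf'g' t ht
    simp only [Pi.sub_apply, hf0, hg.1.2, sub_zero] at this
    exact this.trans (mul_le_mul_of_nonneg_left ht.2 hη.le)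
  refine ⟨g, g', hg, hgC, fun i hi => ?_⟩
  have hηε : η * (t₀ + 2) = ε := div_mul_cancel₀ ε (by positivity)
  calc _ ≤ η * t₀ + η := add_le_add
        (Real.biSup_le (by positivity) fun t ht =>
          (Seminorm.le_finset_sup_apply hi).trans (hfg t ht))
        (Real.biSup_le hη.le fun t ht => (Seminorm.le_finset_sup_apply hi).trans (hf'g' t ht))
    _ < ε := by nlinarith

/-- Under the standing assumptions of the Desch–Schappacher theorem, assuming additionally
that `D(C)` is dense in `X`: the set `D(𝒟) ∩ D(𝒞)` is dense in `D(𝒟)` with respect to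
the graph topology on `D(𝒟)` generated by the seminorms `f ↦ p^∞(f) + p^∞(f')`, `p ∈ Γ`
(density is expressed by approximation up to `ε` with respect to any finitely many of
these seminorms). -/
theorem dense_in_graph_topology
    {X Xb : Type*} {ι : Type*} [Nonempty ι]
    [AddCommGroup X] [Module ℝ X] [UniformSpace X] [IsUniformAddGroup X]
    [ContinuousSMul ℝ X] [T2Space X]
    [AddCommGroup Xb] [Module ℝ Xb] [UniformSpace Xb] [IsUniformAddGroup Xb]
    [ContinuousSMul ℝ Xb] [T2Space Xb] [LocallyConvexSpace ℝ Xb]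
    (hXsc : SeqComplete X) (hXbsc : SeqComplete Xb)
    (Γ : SeminormFamily ℝ X ι) (hΓ : WithSeminorms Γ)
    (T : ℝ → X →L[ℝ] X) (hT : IsC0Semigroup T) (hTloc : IsLocallyEquicontinuous T)
    (domA : Set X) (A : X → X) (hA : IsGenerator T domA A)
    (e : X →L[ℝ] Xb) (he : Function.Injective e) (hedense : DenseRange e)
    (Tb : ℝ → Xb →L[ℝ] Xb) (hTb : IsC0Semigroup Tb) (hTbloc : IsLocallyEquicontinuous Tb)
    (Ab : Xb → Xb) (hAb : IsGenerator Tb (Set.range e) Ab)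
    (hTbe : ∀ t : ℝ, 0 ≤ t → ∀ x : X, Tb t (e x) = e (T t x))
    (B : X →L[ℝ] Xb)
    (t₀ : ℝ) (ht₀ : 0 < t₀)
    -- condition (c): the integral `∫₀^{t₀} T̄(t₀ - t) B f(t) dt` belongs to `X`
    (hc : ∀ f : ℝ → X, ContinuousOn f (Icc (0 : ℝ) t₀) →
      ∃ x : X, IsRiemannIntegral (fun t : ℝ => Tb (t₀ - t) (B (f t))) 0 t₀ (e x))
    -- condition (d): `p(∫₀^{t₀} T̄(t₀ - t) B f(t) dt) ≤ K · sup_{t ∈ [0,t₀]} p(f t)`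
    (hd : ∀ i : ι, ∃ K : ℝ, K ∈ Ioo (0 : ℝ) 1 ∧
      ∀ f : ℝ → X, ContinuousOn f (Icc (0 : ℝ) t₀) → ∀ x : X,
        IsRiemannIntegral (fun t : ℝ => Tb (t₀ - t) (B (f t))) 0 t₀ (e x) →
          Γ i x ≤ K * ⨆ t ∈ Icc (0 : ℝ) t₀, Γ i (f t))
    -- the perturbed operator `C = (Ā + B)|_X`
    (domC : Set X) (hdomC : domC = {x : X | ∃ y : X, e y = Ab (e x) + B x})
    (C : X → X) (hC : ∀ x ∈ domC, e (C x) = Ab (e x) + B x)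
    (hdense : Dense domC) :
    ∀ f f' : ℝ → X, MemDD t₀ f f' → ∀ ε : ℝ, 0 < ε → ∀ s : Finset ι,
      ∃ g g' : ℝ → X, MemDD t₀ g g' ∧ MemDA t₀ domC C g ∧
        ∀ i ∈ s, (⨆ t ∈ Icc (0 : ℝ) t₀, Γ i (f t - g t)) +
          (⨆ t ∈ Icc (0 : ℝ) t₀, Γ i (f' t - g' t)) < ε :=
  dense_in_graph_topology_general Γ hΓ e he Tb Ab hAb B t₀ ht₀ domC hdomC C hC hdense
end
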